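/- Let Φ be a t-uniform purified code state, e ∈ {1,…,n}, and T ⊆ {1,…,n}∖{e} with |T| = t. Adjoin two ancilla qudits a and b, each of dimension Q, initialized in the basis state e_0. Then there exists a unitary V acting only on the qudits in T together with the ancillas a and b such that V(Φ ⊗ (e_0)_a ⊗ (e_0)_b) = Φ̃ ⊗ ω, where Φ̃ is the state with the same amplitudes as Φ but with ancilla register a playing the role of the e-th qudit (all other registers unchanged), and ω = Q^{−1/2} Σ_{m=0}^{Q−1} e_m ⊗ e_m is a maximally entangled state on the pair (qudit e, ancilla b). In particular, the erasure of any single node of an [[n, 2t−n]]_Q quantum MDS code can be corrected by a replacement node communicating with any t of the remaining n−1 nodes (Lemma 3.2). -/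

import Mathlib

open scoped BigOperators

noncomputable section

/-- Combine an assignment on `A` with an assignment on the complement of `A`
into a full computational-basis string. -/
def mergeOn {n Q : ℕ} (A : Finset (Fin n)) (u : {i // i ∈ A} → Fin Q)
    (v : {i // i ∉ A} → Fin Q) : Fin n → Fin Q :=
  fun i => if h : i ∈ A then u ⟨i, h⟩ else v ⟨i, h⟩

/-- Reduced density matrix of a purified code state `Φ` on the qudits in `A`
(the reference register and the qudits outside `A` are traced out). -/
def rdm {Q k n : ℕ} (Φ : (Fin k → Fin Q) → (Fin n → Fin Q) → ℂ)
    (A : Finset (Fin n)) :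
    Matrix ({i // i ∈ A} → Fin Q) ({i // i ∈ A} → Fin Q) ℂ :=
  Matrix.of fun u v => ∑ s : Fin k → Fin Q, ∑ w : {i // i ∉ A} → Fin Q,
    Φ s (mergeOn A u w) * (starRingEnd ℂ) (Φ s (mergeOn A v w))

/-- `Φ` is `t`-uniform: every set of `t` qudits is maximally mixed. -/
def TUniform {Q k n : ℕ} (t : ℕ)
    (Φ : (Fin k → Fin Q) → (Fin n → Fin Q) → ℂ) : Prop :=
  ∀ A : Finset (Fin n), A.card = t →
    rdm Φ A = ((Q : ℂ) ^ t)⁻¹ •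
      (1 : Matrix ({i // i ∈ A} → Fin Q) ({i // i ∈ A} → Fin Q) ℂ)


/-- Replace the coordinates of `w` on the set `T` by the assignment `u`. -/
def setCoords {n Q : ℕ} (T : Finset (Fin n)) (w : Fin n → Fin Q)
    (u : {i // i ∈ T} → Fin Q) : Fin n → Fin Q :=
  fun i => if h : i ∈ T then u ⟨i, h⟩ else w i

/-!
For each state `p` of the reference register and of the qudits off `T` (there are
`Q ^ (k + n - t) = Q ^ t` of them), `V` has to send the local vector of `Φ ⊗ e_0 ⊗ e_0` on
`(T, a, b)` to that of `Φ̃ ⊗ ω`. A unitary with prescribed images exists as soon as both families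
are orthogonal with a common norm. For the inputs this is `t`-uniformity on `T` read from the
other side: the square matrix `M` of `Φ` between `T` and its complement has `M Mᴴ = Q⁻ᵗ`, hence
`Mᴴ M = Q⁻ᵗ`. For the outputs the overlap traces out the `t + 1` qudits `T ∪ {e}`; exchanging `e`
for some `q ∈ T` turns it into the same statement for the `t`-set `T \ {q} ∪ {e}`, and tracing
out `q` as well contributes a factor `Q`, which the normalisation of `ω` cancels.
-/

open Matrix Function

theorem Orthonormal.exists_orthonormalBasis_apply_embedding {𝕜 E κ L : Type*} [RCLike 𝕜]
    [NormedAddCommGroup E] [InnerProductSpace 𝕜 E] [FiniteDimensional 𝕜 E] [Fintype L]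
    (hcard : Module.finrank 𝕜 E = Fintype.card L) {w : κ → E} (hw : Orthonormal 𝕜 w)
    (f : κ ↪ L) : ∃ b : OrthonormalBasis L 𝕜 E, ∀ i, b (f i) = w i := by
  have hrestrict : (Set.range f).domRestrict (extend f w 0)
      = w ∘ (Equiv.ofInjective f f.injective).symm := by
    funext x
    obtain ⟨_, i, rfl⟩ := x
    rw [Function.comp_apply, Equiv.ofInjective_symm_apply]
    exact f.injective.extend_apply _ _ i
  have hon : Orthonormal 𝕜 ((Set.range f).domRestrict (extend f w 0)) := by
    rw [hrestrict]
    exact hw.comp _ (Equiv.injective _)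
  obtain ⟨b, hb⟩ := hon.exists_orthonormalBasis_extension_of_card_eq hcard
  exact ⟨b, fun i => (hb (f i) ⟨i, rfl⟩).trans (f.injective.extend_apply _ _ i)⟩

theorem Matrix.exists_mem_unitaryGroup_mulVec_eq {κ L : Type*} [Fintype κ] [Fintype L]
    [DecidableEq κ] [DecidableEq L] (hcard : Fintype.card κ ≤ Fintype.card L) {u v : κ → L → ℂ}
    (hu : ∀ i j, star (u i) ⬝ᵥ u j = if i = j then 1 else 0)
    (hv : ∀ i j, star (v i) ⬝ᵥ v j = if i = j then 1 else 0) :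
    ∃ V ∈ unitaryGroup L ℂ, ∀ i, V *ᵥ u i = v i := by
  obtain ⟨f⟩ := Embedding.nonempty_of_card_le hcard
  have hextend (w : κ → L → ℂ) (hw : ∀ i j, star (w i) ⬝ᵥ w j = if i = j then 1 else 0) :
      ∃ b : OrthonormalBasis L ℂ (EuclideanSpace ℂ L), ∀ i, b (f i) = WithLp.toLp 2 (w i) := by
    refine Orthonormal.exists_orthonormalBasis_apply_embedding finrank_euclideanSpace ?_ f
    rw [orthonormal_iff_ite]
    intro i j
    rw [EuclideanSpace.inner_toLp_toLp, dotProduct_comm, hw]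
  obtain ⟨bu, hbu⟩ := hextend u hu
  obtain ⟨bv, hbv⟩ := hextend v hv
  let std := (EuclideanSpace.basisFun L ℂ).toBasis
  have hcol (b : OrthonormalBasis L ℂ (EuclideanSpace ℂ L)) (l : L) :
      std.toMatrix b *ᵥ Pi.single l 1 = b l := by
    ext r
    simp [std, Module.Basis.toMatrix_apply]
  have hBu := (EuclideanSpace.basisFun L ℂ).toMatrix_orthonormalBasis_mem_unitary bu
  have hBv := (EuclideanSpace.basisFun L ℂ).toMatrix_orthonormalBasis_mem_unitary bv
  refine ⟨std.toMatrix bv * star (std.toMatrix bu),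
    Submonoid.mul_mem _ hBv (Unitary.star_mem hBu), fun i => ?_⟩
  have hui : u i = std.toMatrix bu *ᵥ Pi.single (f i) 1 := by rw [hcol, hbu]
  rw [hui, mulVec_mulVec, Matrix.mul_assoc, mem_unitaryGroup_iff'.mp hBu, Matrix.mul_one, hcol,
    hbv]

section Development

variable {Q k n t : ℕ}

lemma setCoords_congr {T : Finset (Fin n)} {W W' : Fin n → Fin Q} (h : ∀ i ∉ T, W i = W' i)
    (u : {i // i ∈ T} → Fin Q) : setCoords T W u = setCoords T W' u := by
  funext i
  by_cases hi : i ∈ T <;> simp [setCoords, hi, h]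

lemma setCoords_restrict (T : Finset (Fin n)) (w : Fin n → Fin Q) :
    setCoords T w (fun i => w i) = w := by
  funext i
  by_cases hi : i ∈ T <;> simp [setCoords, hi]

lemma mergeOn_restrict (A : Finset (Fin n)) (u : {i // i ∈ A} → Fin Q) (w : Fin n → Fin Q) :
    mergeOn A u (fun i => w i) = setCoords A w u := rfl

lemma update_setCoords {T : Finset (Fin n)} {e : Fin n} (heT : e ∉ T) (W : Fin n → Fin Q)
    (u : {i // i ∈ T} → Fin Q) (a : Fin Q) :
    update (setCoords T W u) e a = setCoords T (update W e a) u := by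
  funext i
  by_cases hi : i ∈ T
  · simp [setCoords, hi, ne_of_mem_of_not_mem hi heT]
  · by_cases hie : i = e
    · subst hie; simp [setCoords, heT]
    · simp [setCoords, hi, hie]

lemma setCoords_insert (A : Finset (Fin n)) (q : Fin n) (W : Fin n → Fin Q)
    (u : {i // i ∈ insert q A} → Fin Q) :
    setCoords (insert q A) W u = setCoords A (update W q (u ⟨q, Finset.mem_insert_self q A⟩))
      (fun i => u ⟨i, Finset.mem_insert_of_mem i.2⟩) := by
  funext i
  by_cases hiA : i ∈ A
  · simp [setCoords, hiA]
  · by_cases hiq : i = q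
    · subst hiq; simp [setCoords, hiA]
    · simp [setCoords, hiA, hiq]

lemma sum_setCoords_insert {M : Type*} [AddCommMonoid M] {A : Finset (Fin n)} {q : Fin n}
    (hq : q ∉ A) (F : (Fin n → Fin Q) → (Fin n → Fin Q) → M) (W W' : Fin n → Fin Q) :
    ∑ u : {i // i ∈ insert q A} → Fin Q,
        F (setCoords (insert q A) W u) (setCoords (insert q A) W' u)
      = ∑ b : Fin Q, ∑ u : {i // i ∈ A} → Fin Q,
          F (setCoords A (update W q b) u) (setCoords A (update W' q b) u) := by
  let split : ({i // i ∈ insert q A} → Fin Q) ≃ Fin Q × ({i // i ∈ A} → Fin Q) :=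
    { toFun := fun u => (u ⟨q, Finset.mem_insert_self q A⟩,
        fun i => u ⟨i, Finset.mem_insert_of_mem i.2⟩)
      invFun := fun p i => if h : i.1 = q then p.1
        else p.2 ⟨i, (Finset.mem_insert.mp i.2).resolve_left h⟩
      left_inv := fun u => by
        funext ⟨i, hi⟩
        by_cases h : i = q
        · subst h; simp
        · simp [h]
      right_inv := fun p => by
        refine Prod.ext (by simp) (funext fun i => ?_)
        simp [ne_of_mem_of_not_mem i.2 hq] }
  rw [← Fintype.sum_prod_type', ← split.sum_comp]
  simp only [setCoords_insert]
  rfl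

section CodeMatrix

variable (Φ : (Fin k → Fin Q) → (Fin n → Fin Q) → ℂ) (A : Finset (Fin n))

def codeMatrix :
    Matrix ({i // i ∈ A} → Fin Q) ((Fin k → Fin Q) × ({i // i ∉ A} → Fin Q)) ℂ :=
  Matrix.of fun u p => Φ p.1 (mergeOn A u p.2)

lemma rdm_eq_codeMatrix_mul_conjTranspose : rdm Φ A = codeMatrix Φ A * (codeMatrix Φ A)ᴴ := by
  ext u v
  simp [rdm, codeMatrix, Matrix.mul_apply, Fintype.sum_prod_type]

lemma card_complement_eq_card {t : ℕ} (hkn : k + n = 2 * t) (hA : A.card = t) :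
    Fintype.card ((Fin k → Fin Q) × ({i // i ∉ A} → Fin Q))
      = Fintype.card ({i // i ∈ A} → Fin Q) := by
  have hAn : A.card ≤ n := by simpa using A.card_le_univ
  simp only [Fintype.card_prod, Fintype.card_fun, Fintype.card_fin, Fintype.card_subtype_compl,
    Fintype.card_coe, hA, ← pow_add]
  congr 1
  omega

variable {Φ A}

/-- The matrix is square up to reindexing (this is where `k = 2t - n` enters), so the
one-sided inverse `Q ^ t • Mᴴ` supplied by `t`-uniformity is two-sided. -/
lemma TUniform.conjTranspose_codeMatrix_mul [NeZero Q] (hΦ : TUniform t Φ)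
    (hkn : k + n = 2 * t) (hA : A.card = t) :
    (codeMatrix Φ A)ᴴ * codeMatrix Φ A = ((Q : ℂ) ^ t)⁻¹ • 1 := by
  set M := codeMatrix Φ A
  have hc : ((Q : ℂ) ^ t) ≠ 0 := pow_ne_zero _ (Nat.cast_ne_zero.mpr (NeZero.ne Q))
  have hright : M * ((Q : ℂ) ^ t • Mᴴ) = 1 := by
    rw [Matrix.mul_smul, ← rdm_eq_codeMatrix_mul_conjTranspose, hΦ A hA, smul_smul,
      mul_inv_cancel₀ hc, one_smul]
  have hleft := (Matrix.mul_eq_one_comm_of_equiv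
    (Fintype.equivOfCardEq (card_complement_eq_card A hkn hA)).symm).mp hright
  rw [Matrix.smul_mul] at hleft
  rw [← hleft, smul_smul, inv_mul_cancel₀ hc, one_smul]

lemma TUniform.sum_conj_mul_setCoords [NeZero Q] (hΦ : TUniform t Φ) (hkn : k + n = 2 * t)
    (hA : A.card = t) (s s' : Fin k → Fin Q) (W W' : Fin n → Fin Q) :
    ∑ u : {i // i ∈ A} → Fin Q,
        starRingEnd ℂ (Φ s (setCoords A W u)) * Φ s' (setCoords A W' u)
      = ((Q : ℂ) ^ t)⁻¹ * if s = s' ∧ ∀ i ∉ A, W i = W' i then 1 else 0 := by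
  have h := congrFun₂ (hΦ.conjTranspose_codeMatrix_mul hkn hA) (s, fun i => W i)
    (s', fun i => W' i)
  simp only [Matrix.mul_apply, Matrix.conjTranspose_apply, codeMatrix, Matrix.of_apply,
    mergeOn_restrict, Matrix.smul_apply, Matrix.one_apply, smul_eq_mul] at h
  simpa [Prod.ext_iff, funext_iff] using h

end CodeMatrix

lemma forall_notMem_update_eq_iff {A : Finset (Fin n)} {q : Fin n} {W W' : Fin n → Fin Q}
    (b : Fin Q) :
    (∀ i ∉ A, update W q b i = update W' q b i) ↔ ∀ i ∉ insert q A, W i = W' i := by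
  simp only [Finset.mem_insert, not_or, and_imp]
  refine ⟨fun h i hiq hiA => ?_, fun h i hiA => ?_⟩
  · simpa [hiq] using h i hiA
  · by_cases hiq : i = q
    · simp [hiq]
    · simpa [hiq] using h i hiq hiA

/-- The sum runs over the `t + 1` qudits `T ∪ {e}`; splitting off some `q ∈ T` leaves the
`t`-set `T \ {q} ∪ {e}`, and the sum over the value at `q` gives the factor `Q`. -/
lemma TUniform.sum_conj_mul_update_setCoords [NeZero Q]
    {Φ : (Fin k → Fin Q) → (Fin n → Fin Q) → ℂ} {T : Finset (Fin n)} {e : Fin n}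
    (hΦ : TUniform t Φ) (hkn : k + n = 2 * t) (hT : T.card = t) (heT : e ∉ T)
    (s s' : Fin k → Fin Q) (W W' : Fin n → Fin Q) :
    ∑ u : {i // i ∈ T} → Fin Q, ∑ a : Fin Q,
        starRingEnd ℂ (Φ s (update (setCoords T W u) e a)) *
          Φ s' (update (setCoords T W' u) e a)
      = Q * ((Q : ℂ) ^ t)⁻¹ * if s = s' ∧ ∀ i ∉ insert e T, W i = W' i then 1 else 0 := by
  obtain ⟨q, hq⟩ : T.Nonempty := Finset.card_pos.mp (by have := e.pos; omega)
  set T₀ := T.erase q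
  have hqT₀ : q ∉ T₀ := Finset.notMem_erase q T
  have heT₀ : e ∉ T₀ := fun h => heT (Finset.mem_of_mem_erase h)
  have hqe : q ≠ e := ne_of_mem_of_not_mem hq heT
  have hA : (insert e T₀).card = t := by
    rw [Finset.card_insert_of_notMem heT₀, Finset.card_erase_of_mem hq]
    omega
  have hT₀ : insert q T₀ = T := Finset.insert_erase hq
  let F : (Fin n → Fin Q) → (Fin n → Fin Q) → ℂ := fun X Y => starRingEnd ℂ (Φ s X) * Φ s' Y
  calc _ = ∑ a : Fin Q, ∑ u : {i // i ∈ insert q T₀} → Fin Q,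
        F (setCoords (insert q T₀) (update W e a) u)
          (setCoords (insert q T₀) (update W' e a) u) := by
        rw [Finset.sum_comm, hT₀]
        simp only [update_setCoords heT, F]
    _ = ∑ b : Fin Q, ∑ a : Fin Q, ∑ u : {i // i ∈ T₀} → Fin Q,
        F (setCoords T₀ (update (update W q b) e a) u)
          (setCoords T₀ (update (update W' q b) e a) u) := by
        rw [Finset.sum_congr rfl fun a _ => sum_setCoords_insert hqT₀ F _ _, Finset.sum_comm]
        simp only [update_comm hqe.symm]
    _ = ∑ b : Fin Q, ∑ u : {i // i ∈ insert e T₀} → Fin Q,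
        F (setCoords (insert e T₀) (update W q b) u)
          (setCoords (insert e T₀) (update W' q b) u) :=
        Finset.sum_congr rfl fun b _ => (sum_setCoords_insert heT₀ F _ _).symm
    _ = _ := by
        simp only [F, hΦ.sum_conj_mul_setCoords hkn hA, forall_notMem_update_eq_iff,
          Finset.insert_comm q e, hT₀, Finset.sum_const, Finset.card_univ, Fintype.card_fin,
          nsmul_eq_mul, mul_assoc]

section LocalRegisters

variable (Φ : (Fin k → Fin Q) → (Fin n → Fin Q) → ℂ) (T : Finset (Fin n))

/-- The amplitudes of `Φ ⊗ e_z ⊗ e_z` on the local registers `(T, a, b)`, when the reference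
register is in state `s` and the qudits off `T` agree with `W`. -/
def localInput (z : Fin Q) (s : Fin k → Fin Q) (W : Fin n → Fin Q) :
    ({i // i ∈ T} → Fin Q) × Fin Q × Fin Q → ℂ :=
  fun r => Φ s (setCoords T W r.1) * (if r.2.1 = z then 1 else 0) * (if r.2.2 = z then 1 else 0)

/-- The amplitudes of `Φ̃ ⊗ ω` on `(T, a, b)` in the same situation: the ancilla `a` takes the
place of qudit `e`, and `b` is in the basis state matching qudit `e`, whose value is `W e`. -/
def localOutput (e : Fin n) (s : Fin k → Fin Q) (W : Fin n → Fin Q) :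
    ({i // i ∈ T} → Fin Q) × Fin Q × Fin Q → ℂ :=
  fun r => Φ s (update (setCoords T W r.1) e r.2.1) *
    ((Real.sqrt (Q : ℝ) : ℂ)⁻¹ * if W e = r.2.2 then 1 else 0)

variable {Φ T}

lemma localInput_congr (z : Fin Q) (s : Fin k → Fin Q) {W W' : Fin n → Fin Q}
    (h : ∀ i ∉ T, W i = W' i) : localInput Φ T z s W = localInput Φ T z s W' := by
  funext r
  simp only [localInput, setCoords_congr h r.1]

lemma localOutput_congr {e : Fin n} (heT : e ∉ T) (s : Fin k → Fin Q) {W W' : Fin n → Fin Q}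
    (h : ∀ i ∉ T, W i = W' i) : localOutput Φ T e s W = localOutput Φ T e s W' := by
  funext r
  simp only [localOutput, setCoords_congr h r.1, h e heT]

lemma TUniform.dotProduct_localInput [NeZero Q] (hΦ : TUniform t Φ) (hkn : k + n = 2 * t)
    (hT : T.card = t) (z : Fin Q) (s s' : Fin k → Fin Q) (W W' : Fin n → Fin Q) :
    star (localInput Φ T z s W) ⬝ᵥ localInput Φ T z s' W'
      = ((Q : ℂ) ^ t)⁻¹ * if s = s' ∧ ∀ i ∉ T, W i = W' i then 1 else 0 := by
  rw [← hΦ.sum_conj_mul_setCoords hkn hT]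
  simp [dotProduct, localInput, Fintype.sum_prod_type]

lemma TUniform.dotProduct_localOutput [NeZero Q] (hΦ : TUniform t Φ) (hkn : k + n = 2 * t)
    (hT : T.card = t) {e : Fin n} (heT : e ∉ T) (s s' : Fin k → Fin Q) (W W' : Fin n → Fin Q) :
    star (localOutput Φ T e s W) ⬝ᵥ localOutput Φ T e s' W'
      = ((Q : ℂ) ^ t)⁻¹ * if s = s' ∧ ∀ i ∉ T, W i = W' i then 1 else 0 := by
  have hsqrt : ((Real.sqrt (Q : ℝ) : ℂ))⁻¹ * ((Real.sqrt (Q : ℝ) : ℂ))⁻¹ = (Q : ℂ)⁻¹ := by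
    rw [← mul_inv, ← Complex.ofReal_mul, Real.mul_self_sqrt (Nat.cast_nonneg Q)]
    simp
  have hQ : (Q : ℂ) ≠ 0 := Nat.cast_ne_zero.mpr (NeZero.ne Q)
  have hcond : (∀ i ∉ T, W i = W' i) ↔ W e = W' e ∧ ∀ i ∉ insert e T, W i = W' i := by
    simp only [Finset.mem_insert, not_or, and_imp]
    exact ⟨fun h => ⟨h e heT, fun i _ hi => h i hi⟩,
      fun h i hi => if hie : i = e then hie ▸ h.1 else h.2 i hie hi⟩
  calc _ = ((Q : ℂ)⁻¹ * if W e = W' e then 1 else 0) *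
        ∑ u : {i // i ∈ T} → Fin Q, ∑ a : Fin Q,
          starRingEnd ℂ (Φ s (update (setCoords T W u) e a)) *
            Φ s' (update (setCoords T W' u) e a) := by
        simp only [dotProduct, Pi.star_apply, localOutput, Fintype.sum_prod_type, Finset.mul_sum]
        refine Finset.sum_congr rfl fun u _ => Finset.sum_congr rfl fun a _ => ?_
        by_cases he : W e = W' e
        · simp [he, Complex.conj_ofReal, ← hsqrt]
          ring
        · simp [he]
    _ = _ := by
        rw [hΦ.sum_conj_mul_update_setCoords hkn hT heT]
        by_cases he : W e = W' e
        · simp only [hcond, he, true_and, if_true]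
          field_simp
        · simp [hcond, he]

end LocalRegisters

theorem TUniform.exists_unitary_mulVec_localInput [NeZero Q]
    {Φ : (Fin k → Fin Q) → (Fin n → Fin Q) → ℂ} {T : Finset (Fin n)} {e : Fin n}
    (hΦ : TUniform t Φ) (hkn : k + n = 2 * t) (hT : T.card = t) (heT : e ∉ T) (z : Fin Q) :
    ∃ V ∈ unitaryGroup (({i // i ∈ T} → Fin Q) × Fin Q × Fin Q) ℂ,
      ∀ s W, V *ᵥ localInput Φ T z s W = localOutput Φ T e s W := by
  let base : ({i // i ∉ T} → Fin Q) → Fin n → Fin Q := mergeOn T fun _ => z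
  have hbase (w' w'' : {i // i ∉ T} → Fin Q) :
      (∀ i ∉ T, base w' i = base w'' i) ↔ w' = w'' := by
    simp only [base, mergeOn, funext_iff, Subtype.forall]
    exact forall₂_congr fun i hi => by simp [hi]
  set c : ℂ := (Real.sqrt ((Q : ℝ) ^ t) : ℂ)
  have hc : starRingEnd ℂ c * c = (Q : ℂ) ^ t := by
    rw [Complex.conj_ofReal, ← Complex.ofReal_mul, Real.mul_self_sqrt (by positivity)]
    simp
  have hQt : ((Q : ℂ) ^ t) ≠ 0 := pow_ne_zero _ (Nat.cast_ne_zero.mpr (NeZero.ne Q))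
  have hnormalize (f : (Fin k → Fin Q) → (Fin n → Fin Q) →
      ({i // i ∈ T} → Fin Q) × Fin Q × Fin Q → ℂ)
      (hf : ∀ s s' W W', star (f s W) ⬝ᵥ f s' W'
        = ((Q : ℂ) ^ t)⁻¹ * if s = s' ∧ ∀ i ∉ T, W i = W' i then 1 else 0)
      (p p' : (Fin k → Fin Q) × ({i // i ∉ T} → Fin Q)) :
      star (c • f p.1 (base p.2)) ⬝ᵥ (c • f p'.1 (base p'.2)) = if p = p' then 1 else 0 := by
    rw [star_smul, smul_dotProduct, dotProduct_smul, hf, smul_eq_mul, smul_eq_mul,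
      ← mul_assoc, Complex.star_def, hc, mul_inv_cancel_left₀ hQt]
    simp only [hbase, Prod.ext_iff]
  have hcard : Fintype.card ((Fin k → Fin Q) × ({i // i ∉ T} → Fin Q))
      ≤ Fintype.card (({i // i ∈ T} → Fin Q) × Fin Q × Fin Q) := by
    rw [card_complement_eq_card T hkn hT, Fintype.card_prod]
    exact Nat.le_mul_of_pos_right _ Fintype.card_pos
  obtain ⟨V, hV, hVuv⟩ := exists_mem_unitaryGroup_mulVec_eq hcard
    (hnormalize _ (hΦ.dotProduct_localInput hkn hT z))
    (hnormalize _ (hΦ.dotProduct_localOutput hkn hT heT))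
  refine ⟨V, hV, fun s W => ?_⟩
  have hW : ∀ i ∉ T, base (fun i => W i) i = W i := fun i hi => by simp [base, mergeOn, hi]
  have h := hVuv (s, fun i => W i)
  rw [Matrix.mulVec_smul, localInput_congr z s hW, localOutput_congr heT s hW] at h
  have hc0 : c ≠ 0 := fun h0 => hQt (by rw [← hc, h0, mul_zero])
  exact smul_right_injective _ hc0 h

end Development

/-- Lemma 3.2.  Erasure correction from any `t` helper nodes: there is a
unitary `V` acting only on the qudits in `T` together with two ancilla qudits `a`, `b`
(initialized in `e_0 ⊗ e_0`) which maps `Φ ⊗ e_0 ⊗ e_0` to `Φ̃ ⊗ ω`, where `Φ̃` is `Φ` with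
the ancilla `a` playing the role of the `e`-th qudit and `ω` is a maximally entangled state
on (qudit `e`, ancilla `b`).  The left-hand side below is the amplitude of
`V (Φ ⊗ e_0 ⊗ e_0)` at the computational-basis point `(s, w, xa, xb)`, where `V` acts only on
the local registers `(T, a, b)`. -/
theorem stmt_4 (Q t n : ℕ) (hQ : 2 ≤ Q) (hn : n ≤ 2 * t)
    (k : ℕ) (hk : k = 2 * t - n)
    (Φ : (Fin k → Fin Q) → (Fin n → Fin Q) → ℂ)
    (huniform : TUniform t Φ)
    (e : Fin n) (T : Finset (Fin n)) (hT : T.card = t) (heT : e ∉ T) :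
    ∃ V : Matrix (({i // i ∈ T} → Fin Q) × Fin Q × Fin Q)
                 (({i // i ∈ T} → Fin Q) × Fin Q × Fin Q) ℂ,
      V ∈ Matrix.unitaryGroup (({i // i ∈ T} → Fin Q) × Fin Q × Fin Q) ℂ ∧
      ∀ (s : Fin k → Fin Q) (w : Fin n → Fin Q) (xa xb : Fin Q),
        (∑ u : {i // i ∈ T} → Fin Q, ∑ ya : Fin Q, ∑ yb : Fin Q,
            V ((fun i => w i.1), xa, xb) (u, ya, yb) *
              (Φ s (setCoords T w u) *
                (if ya = (⟨0, by omega⟩ : Fin Q) then 1 else 0) *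
                (if yb = (⟨0, by omega⟩ : Fin Q) then 1 else 0)))
          = Φ s (Function.update w e xa) *
              ((Real.sqrt (Q : ℝ) : ℂ)⁻¹ * (if w e = xb then 1 else 0)) := by
  have : NeZero Q := ⟨by omega⟩
  obtain ⟨V, hV, hVΦ⟩ :=
    huniform.exists_unitary_mulVec_localInput (by omega) hT heT ⟨0, by omega⟩
  refine ⟨V, hV, fun s w xa xb => ?_⟩
  simpa only [mulVec, dotProduct, Fintype.sum_prod_type, localInput, localOutput,
    setCoords_restrict] using congrFun (hVΦ s w) ((fun i => w i.1), xa, xb)
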